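/- The probability that two integers chosen independently and uniformly from {1,...,n} are coprime converges to 6/π² = 1/ζ(2) as n → ∞. -/

import Mathlib

/-!
Möbius inversion writes the indicator of `gcd a b = 1` as `∑_{d ∣ gcd a b} μ d`; swapping the
sums, the number of coprime pairs in `{1,…,n}²` is `∑_{d ≤ n} μ d ⌊n/d⌋²`. After dividing by
`n²`, the `d`-th term tends to `μ d / d²` and is dominated by `1 / d²`, so by dominated
convergence the probability tends to `∑ μ d / d² = 1 / ζ(2) = 6 / π²`.
-/

open Filter Finset Real ArithmeticFunction Topology
open scoped ArithmeticFunction.Moebius LSeries.notation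

lemma LSeries_moebius_eq_inv_riemannZeta {s : ℂ} (hs : 1 < s.re) :
    LSeries (↗μ) s = (riemannZeta s)⁻¹ := by
  rw [← LSeries_zeta_eq_riemannZeta hs]
  exact eq_inv_of_mul_eq_one_right (LSeries_zeta_mul_Lseries_moebius hs)

lemma tsum_moebius_div_sq : ∑' d : ℕ, (μ d : ℝ) / d ^ 2 = 6 / π ^ 2 := by
  have h := LSeries_moebius_eq_inv_riemannZeta (s := 2) (by norm_num)
  rw [riemannZeta_two, inv_div, LSeries] at h
  apply Complex.ofReal_injective
  push_cast [Complex.ofReal_tsum]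
  rw [← h]
  congr 1 with d
  rw [LSeries.term_of_ne_zero' two_ne_zero, Complex.cpow_ofNat]

lemma sum_divisors_moebius (m : ℕ) : ∑ d ∈ m.divisors, μ d = if m = 1 then 1 else 0 := by
  rw [← coe_mul_zeta_apply, moebius_mul_coe_zeta, one_apply]

lemma card_filter_dvd_Icc (n d : ℕ) : #{a ∈ Icc 1 n | d ∣ a} = n / d :=
  Nat.Ioc_filter_dvd_card_eq_div n d

theorem card_filter_coprime_Icc_product (n : ℕ) :
    (#{q ∈ Icc 1 n ×ˢ Icc 1 n | Nat.gcd q.1 q.2 = 1} : ℤ) =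
      ∑ d ∈ Icc 1 n, μ d * (n / d : ℕ) ^ 2 := by
  have hswap : ∀ q d, q ∈ Icc 1 n ×ˢ Icc 1 n ∧ d ∈ (Nat.gcd q.1 q.2).divisors ↔
      q ∈ {q ∈ Icc 1 n ×ˢ Icc 1 n | d ∣ q.1 ∧ d ∣ q.2} ∧ d ∈ Icc 1 n := by
    rintro ⟨a, b⟩ d
    simp only [mem_product, mem_Icc, mem_filter, Nat.mem_divisors, Nat.dvd_gcd_iff, ne_eq,
      Nat.gcd_eq_zero_iff]
    constructor
    · rintro ⟨⟨⟨ha1, han⟩, hb⟩, ⟨hda, hdb⟩, -⟩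
      exact ⟨⟨⟨⟨ha1, han⟩, hb⟩, hda, hdb⟩, Nat.pos_of_dvd_of_pos hda ha1,
        (Nat.le_of_dvd ha1 hda).trans han⟩
    · rintro ⟨⟨⟨ha, hb⟩, hda, hdb⟩, -⟩
      exact ⟨⟨ha, hb⟩, ⟨hda, hdb⟩, by omega⟩
  calc (#{q ∈ Icc 1 n ×ˢ Icc 1 n | Nat.gcd q.1 q.2 = 1} : ℤ)
      = ∑ q ∈ Icc 1 n ×ˢ Icc 1 n, ∑ d ∈ (Nat.gcd q.1 q.2).divisors, μ d := by
        simp only [sum_divisors_moebius, card_filter]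
        push_cast
        rfl
    _ = ∑ d ∈ Icc 1 n, ∑ _q ∈ {q ∈ Icc 1 n ×ˢ Icc 1 n | d ∣ q.1 ∧ d ∣ q.2}, μ d :=
        sum_comm' hswap
    _ = ∑ d ∈ Icc 1 n, μ d * (n / d : ℕ) ^ 2 := by
        refine sum_congr rfl fun d _ => ?_
        rw [sum_const, filter_product, card_product, card_filter_dvd_Icc, nsmul_eq_mul]
        push_cast
        ring

lemma natCast_div_div_le (n d : ℕ) : ((n / d : ℕ) : ℝ) / n ≤ (d : ℝ)⁻¹ := by
  rcases eq_or_ne n 0 with rfl | hn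
  · simp
  calc ((n / d : ℕ) : ℝ) / n ≤ ((n : ℝ) / d) / n := by gcongr; exact Nat.cast_div_le
    _ = (d : ℝ)⁻¹ := div_div_cancel_left' (Nat.cast_ne_zero.mpr hn)

lemma tendsto_natCast_div_div_atTop (d : ℕ) :
    Tendsto (fun n : ℕ => ((n / d : ℕ) : ℝ) / n) atTop (𝓝 (d : ℝ)⁻¹) := by
  rcases eq_or_ne d 0 with rfl | hd
  · simp
  have hd' : (0 : ℝ) < d := by positivity
  have h := (tendsto_nat_floor_div_atTop.comp
    (tendsto_natCast_atTop_atTop.atTop_div_const hd')).mul_const (d : ℝ)⁻¹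
  rw [one_mul] at h
  refine h.congr' ?_
  filter_upwards [eventually_ne_atTop 0] with n hn
  simp only [Function.comp_apply, Nat.floor_div_eq_div]
  field_simp

lemma tendsto_tsum_moebius_mul_div_sq :
    Tendsto (fun n : ℕ => ∑' d, (μ d : ℝ) * (((n / d : ℕ) : ℝ) / n) ^ 2) atTop
      (𝓝 (∑' d : ℕ, (μ d : ℝ) / d ^ 2)) := by
  refine tendsto_tsum_of_dominated_convergence (bound := fun d : ℕ => ((d : ℝ) ^ 2)⁻¹)
    (Real.summable_nat_pow_inv.mpr one_lt_two) (fun d => ?_) (.of_forall fun n d => ?_)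
  · simpa [div_eq_mul_inv, inv_pow] using
      ((tendsto_natCast_div_div_atTop d).pow 2).const_mul (μ d : ℝ)
  · have hμ : |(μ d : ℝ)| ≤ 1 := by exact_mod_cast abs_moebius_le_one
    rw [norm_mul, norm_pow, Real.norm_eq_abs, Real.norm_of_nonneg (by positivity), ← inv_pow]
    calc |(μ d : ℝ)| * (((n / d : ℕ) : ℝ) / n) ^ 2 ≤ 1 * ((d : ℝ)⁻¹) ^ 2 := by
          gcongr
          exact natCast_div_div_le n d
      _ = ((d : ℝ)⁻¹) ^ 2 := one_mul _

lemma card_coprime_div_sq_eq_tsum (n : ℕ) :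
    (#{q ∈ Icc 1 n ×ˢ Icc 1 n | Nat.gcd q.1 q.2 = 1} : ℝ) / n ^ 2 =
      ∑' d, (μ d : ℝ) * (((n / d : ℕ) : ℝ) / n) ^ 2 := by
  have hvanish : ∀ d ∉ Icc 1 n, (μ d : ℝ) * (((n / d : ℕ) : ℝ) / n) ^ 2 = 0 := by
    intro d hd
    rw [mem_Icc, not_and_or, not_le, not_le, Nat.lt_one_iff] at hd
    simp [Nat.div_eq_zero_iff, hd]
  rw [tsum_eq_sum hvanish, ← Int.cast_natCast, card_filter_coprime_Icc_product]
  simp only [Int.cast_sum, Int.cast_mul, Int.cast_pow, Int.cast_natCast, sum_div, div_pow,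
    mul_div_assoc]

/-- The probability that two independent uniform elements of `{1,…,n}` are coprime
converges to `6/π²`. -/
theorem coprime_probability_tendsto :
    Tendsto (fun n : ℕ =>
        ((Finset.filter (fun q : ℕ × ℕ => Nat.gcd q.1 q.2 = 1)
            ((Finset.Icc 1 n) ×ˢ (Finset.Icc 1 n))).card : ℝ) / (n : ℝ) ^ 2)
      atTop (nhds (6 / Real.pi ^ 2)) := by
  simp_rw [card_coprime_div_sq_eq_tsum, ← tsum_moebius_div_sq]
  exact tendsto_tsum_moebius_mul_div_sq
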